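/- For smooth functions φ on the region {t+1 > |x|} of ℝ^{1+2}, the following multiplier identity holds pointwise in the hyperboloidal variables: −(∂̄_τ φ)(□φ) = (1/2) ∂̄_τ( |∂̄_τ φ|^2 + Σ_{i=1}^2 |∂̄_i φ|^2 ) + Σ_{i=1}^2 ∂̄_i( (y^i/τ)|∂̄_τ φ|^2 − (∂̄_τ φ)(∂̄_i φ) ). -/

import Mathlib

noncomputable section

/-- Points of `ℝ^{1+2}`: `(t, x¹, x²)`. -/
abbrev Pt : Type := ℝ × ℝ × ℝ

/-- `∂_t`. -/
def d0 (φ : Pt → ℝ) (p : Pt) : ℝ := fderiv ℝ φ p (1, 0, 0)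
/-- `∂_1`. -/
def d1 (φ : Pt → ℝ) (p : Pt) : ℝ := fderiv ℝ φ p (0, 1, 0)
/-- `∂_2`. -/
def d2 (φ : Pt → ℝ) (p : Pt) : ℝ := fderiv ℝ φ p (0, 0, 1)

/-- `r = |x|`. -/
def rr (p : Pt) : ℝ := Real.sqrt (p.2.1 ^ 2 + p.2.2 ^ 2)

/-- The hyperbolic time `τ = √((t+1)² - |x|²)`. -/
def tau (p : Pt) : ℝ := Real.sqrt ((p.1 + 1) ^ 2 - (p.2.1 ^ 2 + p.2.2 ^ 2))

/-- The hyperboloidal frame derivative `∂̄_τ = (τ/(t+1)) ∂_t`. -/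
def btau (φ : Pt → ℝ) (p : Pt) : ℝ := (tau p / (p.1 + 1)) * d0 φ p

/-- The hyperboloidal frame derivative `∂̄_1 = ∂_1 + (x¹/(t+1)) ∂_t`. -/
def b1 (φ : Pt → ℝ) (p : Pt) : ℝ := d1 φ p + (p.2.1 / (p.1 + 1)) * d0 φ p

/-- The hyperboloidal frame derivative `∂̄_2 = ∂_2 + (x²/(t+1)) ∂_t`. -/
def b2 (φ : Pt → ℝ) (p : Pt) : ℝ := d2 φ p + (p.2.2 / (p.1 + 1)) * d0 φ p

/-- The wave operator `□ = -∂_t² + Δ`. -/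
def Box (φ : Pt → ℝ) (p : Pt) : ℝ := -d0 (d0 φ) p + d1 (d1 φ) p + d2 (d2 φ) p

section helpers
variable {f g : Pt → ℝ} {p v : Pt}

lemma Dv_add (hf : DifferentiableAt ℝ f p) (hg : DifferentiableAt ℝ g p) :
    fderiv ℝ (fun q => f q + g q) p v = fderiv ℝ f p v + fderiv ℝ g p v := by
  rw [fderiv_fun_add hf hg]; rfl

lemma Dv_sub (hf : DifferentiableAt ℝ f p) (hg : DifferentiableAt ℝ g p) :
    fderiv ℝ (fun q => f q - g q) p v = fderiv ℝ f p v - fderiv ℝ g p v := by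
  rw [fderiv_fun_sub hf hg]; rfl

lemma Dv_mul (hf : DifferentiableAt ℝ f p) (hg : DifferentiableAt ℝ g p) :
    fderiv ℝ (fun q => f q * g q) p v
      = fderiv ℝ f p v * g p + f p * fderiv ℝ g p v := by
  rw [fderiv_fun_mul hf hg]
  simp [ContinuousLinearMap.add_apply, ContinuousLinearMap.smul_apply, smul_eq_mul]
  ring

lemma Dv_sq (hf : DifferentiableAt ℝ f p) :
    fderiv ℝ (fun q => f q ^ 2) p v = 2 * f p * fderiv ℝ f p v := by
  simp only [pow_two]
  rw [Dv_mul hf hf]; ring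

lemma Dv_inv (hg : DifferentiableAt ℝ g p) (h0 : g p ≠ 0) :
    fderiv ℝ (fun q => (g q)⁻¹) p v = -(g p ^ 2)⁻¹ * fderiv ℝ g p v := by
  have h := (hasDerivAt_inv h0).comp_hasFDerivAt p hg.hasFDerivAt
  rw [show (fun q => (g q)⁻¹) = (fun y => y⁻¹) ∘ g from rfl, h.fderiv]
  simp [ContinuousLinearMap.smul_apply, smul_eq_mul]

lemma Dv_div (hf : DifferentiableAt ℝ f p) (hg : DifferentiableAt ℝ g p) (h0 : g p ≠ 0) :
    fderiv ℝ (fun q => f q / g q) p v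
      = (fderiv ℝ f p v * g p - f p * fderiv ℝ g p v) / g p ^ 2 := by
  simp only [div_eq_mul_inv]
  rw [Dv_mul hf (hg.fun_inv h0), Dv_inv hg h0]
  field_simp
  ring

lemma diff_div (hf : DifferentiableAt ℝ f p) (hg : DifferentiableAt ℝ g p) (h0 : g p ≠ 0) :
    DifferentiableAt ℝ (fun q => f q / g q) p := by
  simpa only [← div_eq_mul_inv] using hf.fun_mul (hg.fun_inv h0)

lemma diff_c0 : DifferentiableAt ℝ (fun q : Pt => q.1) p := differentiableAt_fst
lemma diff_c1 : DifferentiableAt ℝ (fun q : Pt => q.2.1) p := differentiableAt_snd.fst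
lemma diff_c2 : DifferentiableAt ℝ (fun q : Pt => q.2.2) p := differentiableAt_snd.snd
lemma diff_t1 : DifferentiableAt ℝ (fun q : Pt => q.1 + 1) p := diff_c0.add_const 1

lemma Dv_c0 : fderiv ℝ (fun q : Pt => q.1) p v = v.1 := by
  rw [fderiv_fst]; rfl
lemma Dv_c1 : fderiv ℝ (fun q : Pt => q.2.1) p v = v.2.1 := by
  have : (fun q : Pt => q.2.1) = (Prod.fst ∘ Prod.snd) := rfl
  rw [this, fderiv_comp _ differentiableAt_fst differentiableAt_snd,
    fderiv_fst, fderiv_snd]; rfl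
lemma Dv_c2 : fderiv ℝ (fun q : Pt => q.2.2) p v = v.2.2 := by
  have : (fun q : Pt => q.2.2) = (Prod.snd ∘ Prod.snd) := rfl
  rw [this, fderiv_comp _ differentiableAt_snd differentiableAt_snd,
    fderiv_snd, fderiv_snd]; rfl
lemma Dv_t1 : fderiv ℝ (fun q : Pt => q.1 + 1) p v = v.1 := by
  rw [Dv_add diff_c0 (differentiableAt_const 1), fderiv_fun_const]
  simp [Dv_c0]

end helpers

section tauLemmas
variable {p v : Pt}

def gg (q : Pt) : ℝ := (q.1 + 1) ^ 2 - (q.2.1 ^ 2 + q.2.2 ^ 2)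

lemma diff_gg : DifferentiableAt ℝ gg p :=
  ((diff_t1.pow 2).sub ((diff_c1.pow 2).add (diff_c2.pow 2)))

lemma Dv_gg : fderiv ℝ gg p v
    = 2 * (p.1 + 1) * v.1 - (2 * p.2.1 * v.2.1 + 2 * p.2.2 * v.2.2) := by
  unfold gg
  rw [Dv_sub (diff_t1.fun_pow 2) ((diff_c1.fun_pow 2).fun_add (diff_c2.fun_pow 2)),
    Dv_add (diff_c1.fun_pow 2) (diff_c2.fun_pow 2), Dv_sq diff_t1, Dv_sq diff_c1, Dv_sq diff_c2,
    Dv_t1, Dv_c1, Dv_c2]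

lemma tau_hasFDerivAt (h : 0 < gg p) :
    HasFDerivAt tau ((1 / (2 * Real.sqrt (gg p))) • fderiv ℝ gg p) p := by
  have := (Real.hasDerivAt_sqrt (ne_of_gt h)).comp_hasFDerivAt p diff_gg.hasFDerivAt
  exact this

lemma diff_tau (h : 0 < gg p) : DifferentiableAt ℝ tau p := (tau_hasFDerivAt h).differentiableAt

lemma tau_sq (h : 0 < gg p) : tau p ^ 2 = (p.1 + 1) ^ 2 - (p.2.1 ^ 2 + p.2.2 ^ 2) :=
  Real.sq_sqrt (le_of_lt h)

lemma tau_pos (h : 0 < gg p) : 0 < tau p := Real.sqrt_pos.mpr h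

lemma Dv_tau (h : 0 < gg p) :
    fderiv ℝ tau p v
      = ((p.1 + 1) * v.1 - p.2.1 * v.2.1 - p.2.2 * v.2.2) / tau p := by
  rw [(tau_hasFDerivAt h).fderiv]
  have hτ : tau p = Real.sqrt (gg p) := rfl
  simp only [ContinuousLinearMap.smul_apply, smul_eq_mul, Dv_gg, ← hτ]
  have h0 : tau p ≠ 0 := ne_of_gt (tau_pos h)
  field_simp
  ring

end tauLemmas

section sndDeriv
variable {φ : Pt → ℝ} {p v w : Pt}

lemma diff_dphi (hφ : ContDiff ℝ (⊤ : ℕ∞) φ) :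
    DifferentiableAt ℝ (fun q => fderiv ℝ φ q w) p :=
  ((ContinuousLinearMap.apply ℝ ℝ w).differentiable.comp
    ((hφ.fderiv_right (m := (⊤ : ℕ∞)) (by simp)).differentiable (by simp))).differentiableAt

lemma Dv_dphi (hφ : ContDiff ℝ (⊤ : ℕ∞) φ) :
    fderiv ℝ (fun q => fderiv ℝ φ q w) p v = fderiv ℝ (fderiv ℝ φ) p v w := by
  have h : DifferentiableAt ℝ (fderiv ℝ φ) p :=
    ((hφ.fderiv_right (m := (⊤ : ℕ∞)) (by simp)).differentiable (by simp)).differentiableAt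
  rw [show (fun q => fderiv ℝ φ q w) = (ContinuousLinearMap.apply ℝ ℝ w) ∘ (fderiv ℝ φ) from rfl,
    fderiv_comp p (ContinuousLinearMap.apply ℝ ℝ w).differentiableAt h,
    ContinuousLinearMap.fderiv]
  rfl

lemma symm_dphi (hφ : ContDiff ℝ (⊤ : ℕ∞) φ) :
    fderiv ℝ (fderiv ℝ φ) p v w = fderiv ℝ (fderiv ℝ φ) p w v :=
  (hφ.contDiffAt.isSymmSndFDerivAt (by rw [minSmoothness_of_isRCLikeNormedField]; exact WithTop.coe_le_coe.mpr (le_top : (2 : ℕ∞) ≤ ⊤))) v w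

end sndDeriv

set_option maxHeartbeats 1000000 in
/-- the hyperboloidal multiplier identity
`-(∂̄_τφ)(□φ) = (1/2)∂̄_τ(|∂̄_τφ|² + Σ|∂̄_iφ|²) + Σ_i ∂̄_i((y^i/τ)|∂̄_τφ|² - ∂̄_τφ ∂̄_iφ)`. -/
theorem hyperboloidal_multiplier_identity (φ : Pt → ℝ) (hφ : ContDiff ℝ (⊤ : ℕ∞) φ)
    (p : Pt) (hp : rr p < p.1 + 1) :
    -(btau φ p) * Box φ p
      = (1 / 2) * btau (fun q => (btau φ q) ^ 2 + (b1 φ q) ^ 2 + (b2 φ q) ^ 2) p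
        + b1 (fun q => (q.2.1 / tau q) * (btau φ q) ^ 2 - btau φ q * b1 φ q) p
        + b2 (fun q => (q.2.2 / tau q) * (btau φ q) ^ 2 - btau φ q * b2 φ q) p := by
  have hr0 : 0 ≤ rr p := Real.sqrt_nonneg _
  have ht1 : 0 < p.1 + 1 := lt_of_le_of_lt hr0 hp
  have hgg : 0 < gg p := by
    unfold gg
    have h2 : (rr p) ^ 2 = p.2.1 ^ 2 + p.2.2 ^ 2 := Real.sq_sqrt (by positivity)
    nlinarith [hp, hr0]
  have hτ0 : tau p ≠ 0 := ne_of_gt (tau_pos hgg)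
  have ht0 : p.1 + 1 ≠ 0 := ne_of_gt ht1
  simp only [btau, b1, b2, d0, d1, d2, Box]
  rw [show d0 φ = (fun q => fderiv ℝ φ q (1,0,0)) from rfl,
      show d1 φ = (fun q => fderiv ℝ φ q (0,1,0)) from rfl,
      show d2 φ = (fun q => fderiv ℝ φ q (0,0,1)) from rfl]
  have hu0 : DifferentiableAt ℝ (fun q => fderiv ℝ φ q ((1:ℝ),(0:ℝ),(0:ℝ))) p := diff_dphi hφ
  have hu1 : DifferentiableAt ℝ (fun q => fderiv ℝ φ q ((0:ℝ),(1:ℝ),(0:ℝ))) p := diff_dphi hφ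
  have hu2 : DifferentiableAt ℝ (fun q => fderiv ℝ φ q ((0:ℝ),(0:ℝ),(1:ℝ))) p := diff_dphi hφ
  have hdivt : DifferentiableAt ℝ (fun q : Pt => tau q / (q.1 + 1)) p :=
    diff_div (diff_tau hgg) diff_t1 ht0
  have hBt : DifferentiableAt ℝ (fun q => tau q / (q.1 + 1) * fderiv ℝ φ q (1,0,0)) p :=
    hdivt.mul hu0
  have hB1 : DifferentiableAt ℝ
      (fun q => fderiv ℝ φ q (0,1,0) + q.2.1/(q.1+1) * fderiv ℝ φ q (1,0,0)) p :=
    hu1.add ((diff_div diff_c1 diff_t1 ht0).mul hu0)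
  have hB2 : DifferentiableAt ℝ
      (fun q => fderiv ℝ φ q (0,0,1) + q.2.2/(q.1+1) * fderiv ℝ φ q (1,0,0)) p :=
    hu2.add ((diff_div diff_c2 diff_t1 ht0).mul hu0)
  have hF1a : DifferentiableAt ℝ (fun q : Pt => q.2.1 / tau q) p :=
    diff_div diff_c1 (diff_tau hgg) hτ0
  have hF2a : DifferentiableAt ℝ (fun q : Pt => q.2.2 / tau q) p :=
    diff_div diff_c2 (diff_tau hgg) hτ0
  simp only [Dv_add ((hBt.fun_pow 2).fun_add (hB1.fun_pow 2)) (hB2.fun_pow 2), Dv_add (hBt.fun_pow 2) (hB1.fun_pow 2),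
    Dv_sq hBt, Dv_sq hB1, Dv_sq hB2,
    Dv_sub (hF1a.fun_mul (hBt.fun_pow 2)) (hBt.fun_mul hB1), Dv_sub (hF2a.fun_mul (hBt.fun_pow 2)) (hBt.fun_mul hB2),
    Dv_mul hF1a (hBt.fun_pow 2), Dv_mul hF2a (hBt.fun_pow 2),
    Dv_mul hBt hB1, Dv_mul hBt hB2, Dv_mul hdivt hu0,
    Dv_add hu1 ((diff_div diff_c1 diff_t1 ht0).fun_mul hu0), Dv_add hu2 ((diff_div diff_c2 diff_t1 ht0).fun_mul hu0),
    Dv_mul (diff_div diff_c1 diff_t1 ht0) hu0, Dv_mul (diff_div diff_c2 diff_t1 ht0) hu0,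
    Dv_div (diff_tau hgg) diff_t1 ht0, Dv_div diff_c1 (diff_tau hgg) hτ0,
    Dv_div diff_c2 (diff_tau hgg) hτ0,
    Dv_div diff_c1 diff_t1 ht0, Dv_div diff_c2 diff_t1 ht0,
    Dv_tau hgg, Dv_t1, Dv_c1, Dv_c2, Dv_dphi hφ]
  have s10 : fderiv ℝ (fderiv ℝ φ) p ((0:ℝ),(1:ℝ),(0:ℝ)) ((1:ℝ),(0:ℝ),(0:ℝ))
      = fderiv ℝ (fderiv ℝ φ) p ((1:ℝ),(0:ℝ),(0:ℝ)) ((0:ℝ),(1:ℝ),(0:ℝ)) := symm_dphi hφ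
  have s20 : fderiv ℝ (fderiv ℝ φ) p ((0:ℝ),(0:ℝ),(1:ℝ)) ((1:ℝ),(0:ℝ),(0:ℝ))
      = fderiv ℝ (fderiv ℝ φ) p ((1:ℝ),(0:ℝ),(0:ℝ)) ((0:ℝ),(0:ℝ),(1:ℝ)) := symm_dphi hφ
  rw [s10, s20]
  have key : tau p ^ 2 = (p.1 + 1) ^ 2 - (p.2.1 ^ 2 + p.2.2 ^ 2) := tau_sq hgg
  set T := tau p with hT
  set S := p.1 + 1 with hS
  set A := p.2.1 with hA
  set B := p.2.2 with hB
  set u0 := (fderiv ℝ φ p) ((1:ℝ),(0:ℝ),(0:ℝ)) with hv0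
  set u1 := (fderiv ℝ φ p) ((0:ℝ),(1:ℝ),(0:ℝ)) with hv1
  set u2 := (fderiv ℝ φ p) ((0:ℝ),(0:ℝ),(1:ℝ)) with hv2
  set m00 := (fderiv ℝ (fderiv ℝ φ) p) ((1:ℝ),(0:ℝ),(0:ℝ)) ((1:ℝ),(0:ℝ),(0:ℝ)) with hm00
  set m01 := (fderiv ℝ (fderiv ℝ φ) p) ((1:ℝ),(0:ℝ),(0:ℝ)) ((0:ℝ),(1:ℝ),(0:ℝ)) with hm01
  set m02 := (fderiv ℝ (fderiv ℝ φ) p) ((1:ℝ),(0:ℝ),(0:ℝ)) ((0:ℝ),(0:ℝ),(1:ℝ)) with hm02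
  set m11 := (fderiv ℝ (fderiv ℝ φ) p) ((0:ℝ),(1:ℝ),(0:ℝ)) ((0:ℝ),(1:ℝ),(0:ℝ)) with hm11
  set m22 := (fderiv ℝ (fderiv ℝ φ) p) ((0:ℝ),(0:ℝ),(1:ℝ)) ((0:ℝ),(0:ℝ),(1:ℝ)) with hm22
  clear_value T S A B u0 u1 u2 m00 m01 m02 m11 m22
  have hTi : T * T⁻¹ = 1 := mul_inv_cancel₀ hτ0
  have hSi : S * S⁻¹ = 1 := mul_inv_cancel₀ ht0
  have key0 : T ^ 2 - (S ^ 2 - (A ^ 2 + B ^ 2)) = 0 := by rw [key]; ring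
  ring_nf
  linear_combination (-B^2*u0^2*T⁻¹*S⁻¹^2 - A^2*u0^2*T⁻¹*S⁻¹^2 + (3 : ℝ)*S*B^2*u0^2*T⁻¹*S⁻¹^3 + (3 : ℝ)*S*A^2*u0^2*T⁻¹*S⁻¹^3 - (2 : ℝ)*S^2*B^2*u0^2*T⁻¹*S⁻¹^4 - (2 : ℝ)*S^2*A^2*u0^2*T⁻¹*S⁻¹^4 - (2 : ℝ)*T*u0^2*S⁻¹^2 - (2 : ℝ)*T*B*u0*m02*S⁻¹^2 - T*B^2*u0*m00*S⁻¹^3 + T*B^2*u0^2*S⁻¹^4 - T*B^2*u0^2*T⁻¹^2*S⁻¹^2 - (2 : ℝ)*T*A*u0*m01*S⁻¹^2 - T*A^2*u0*m00*S⁻¹^3 + T*A^2*u0^2*S⁻¹^4 - T*A^2*u0^2*T⁻¹^2*S⁻¹^2 + T*S*B^2*u0^2*T⁻¹^2*S⁻¹^3 + T*S*A^2*u0^2*T⁻¹^2*S⁻¹^3 - T*S^2*u0*m00*S⁻¹^3 - (2 : ℝ)*T^2*u0^2*T⁻¹*S⁻¹^2 + T^3*u0*m00*S⁻¹^3 - T^3*u0^2*S⁻¹^4)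 * hTi + (B^2*u0^2*T⁻¹*S⁻¹^2 + A^2*u0^2*T⁻¹*S⁻¹^2 + S*B*u0*u2*T⁻¹*S⁻¹^2 - S*B^2*u0^2*T⁻¹*S⁻¹^3 + S*A*u0*u1*T⁻¹*S⁻¹^2 - S*A^2*u0^2*T⁻¹*S⁻¹^3 - T*u0*m00*S⁻¹ + (2 : ℝ)*T*u0^2*S⁻¹^2 - T*S*u0*m00*S⁻¹^2) * hSi + (-T^2*u0*m00*T⁻¹*S⁻¹^3 + T^2*u0^2*T⁻¹*S⁻¹^4) * key0
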